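/- Let r : [0,1] → (−1,1)² be a Lipschitz continuous closed curve (r(0) = r(1)) with image γ, and let K > 0. Then there exists a constant C > 0 such that for every integer N ≥ 2, with h = 2/N and grid nodes (x_i, y_j) = (−1 + i h, −1 + j h) for 0 ≤ i, j ≤ N, the number of pairs (i,j) with dist((x_i,y_j), γ) ≤ K h is at most C N. -/

import Mathlib

/-! A node within distance `K h` of `γ` is within sup-distance `(K + 1) h` of some point `r t`.
Sampling the curve at `t_k = k / M`, with `M ≥ L N` a multiple of `N`, moves `r t` by at most
`L / M ≤ h`, so every counted node lies in the sup-ball of radius `(K + 2) h` around one of the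
`M + 1 = O(N)` samples, and each such ball contains at most `(⌊2 (K + 2)⌋₊ + 1)²` nodes,
independently of `N`. -/

open Set

noncomputable section

open scoped Classical

/-- Grid node `(x_i, y_j) = (-1 + i h, -1 + j h)` with `h = 2/N`. -/
def nodePt (N i j : ℕ) : ℝ × ℝ := (-1 + i * (2 / (N : ℝ)), -1 + j * (2 / (N : ℝ)))

/-- The Euclidean distance from a point `z ∈ ℝ²` to the image `γ = r([0,1])` of a curve. -/
def distToCurve (r : ℝ → ℝ × ℝ) (z : ℝ × ℝ) : ℝ :=
  sInf ((fun t => Real.sqrt ((z.1 - (r t).1) ^ 2 + (z.2 - (r t).2) ^ 2)) '' Icc 0 1)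

lemma card_le_floor_add_one_of_natCast_mem_Icc {S : Finset ℕ} {u D : ℝ}
    (hS : ∀ i ∈ S, (i : ℝ) ∈ Icc u (u + D)) : S.card ≤ ⌊D⌋₊ + 1 := by
  rcases S.eq_empty_or_nonempty with rfl | hne
  · simp
  have hmin := hS _ (S.min'_mem hne)
  have hmax := hS _ (S.max'_mem hne)
  have hspread : S.max' hne - S.min' hne ≤ ⌊D⌋₊ := by
    refine Nat.le_floor ?_
    rw [Nat.cast_sub (S.min'_le _ (S.max'_mem hne))]
    linarith [hmin.1, hmax.2]
  calc S.card ≤ (Finset.Icc (S.min' hne) (S.max' hne)).card :=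
        Finset.card_le_card fun i hi => Finset.mem_Icc.2 ⟨S.min'_le i hi, S.le_max' i hi⟩
    _ ≤ ⌊D⌋₊ + 1 := by rw [Nat.card_Icc]; omega

lemma card_filter_abs_node_sub_le {N : ℕ} (hN : 0 < N) (a c : ℝ) :
    ((Finset.range (N + 1)).filter fun i : ℕ => |-1 + i * (2 / (N : ℝ)) - a| ≤ c * (2 / N)).card
      ≤ ⌊2 * c⌋₊ + 1 := by
  have hh : (0 : ℝ) < 2 / N := by positivity
  refine card_le_floor_add_one_of_natCast_mem_Icc (u := (a + 1) / (2 / N) - c) fun i hi => ?_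
  obtain ⟨hlo, hhi⟩ := abs_le.1 (Finset.mem_filter.1 hi).2
  constructor
  · rw [sub_le_iff_le_add, div_le_iff₀ hh]; linarith
  · rw [show (a + 1) / (2 / N) - c + 2 * c = (a + 1) / (2 / N) + c by ring,
      ← sub_le_iff_le_add, le_div_iff₀ hh]
    linarith

def nearNodes (N : ℕ) (w : ℝ × ℝ) (c : ℝ) : Finset (ℕ × ℕ) :=
  (Finset.range (N + 1) ×ˢ Finset.range (N + 1)).filter
    fun ij => dist (nodePt N ij.1 ij.2) w ≤ c * (2 / N)

lemma card_nearNodes_le {N : ℕ} (hN : 0 < N) (w : ℝ × ℝ) (c : ℝ) :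
    (nearNodes N w c).card ≤ (⌊2 * c⌋₊ + 1) ^ 2 := by
  have hprod : nearNodes N w c =
      ((Finset.range (N + 1)).filter fun i : ℕ => |-1 + i * (2 / (N : ℝ)) - w.1| ≤ c * (2 / N))
        ×ˢ ((Finset.range (N + 1)).filter fun j : ℕ =>
          |-1 + j * (2 / (N : ℝ)) - w.2| ≤ c * (2 / N)) := by
    rw [← Finset.filter_product]
    simp only [nearNodes, Prod.dist_eq, max_le_iff, Real.dist_eq, nodePt]
  rw [hprod, Finset.card_product, sq]
  exact Nat.mul_le_mul (card_filter_abs_node_sub_le hN _ _) (card_filter_abs_node_sub_le hN _ _)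

lemma Prod.dist_le_sqrt (z w : ℝ × ℝ) :
    dist z w ≤ Real.sqrt ((z.1 - w.1) ^ 2 + (z.2 - w.2) ^ 2) := by
  rw [Prod.dist_eq, Real.dist_eq, Real.dist_eq, max_le_iff, ← Real.sqrt_sq_eq_abs,
    ← Real.sqrt_sq_eq_abs]
  constructor <;>
    exact Real.sqrt_le_sqrt (by nlinarith [sq_nonneg (z.1 - w.1), sq_nonneg (z.2 - w.2)])

lemma exists_dist_lt_of_distToCurve_le {r : ℝ → ℝ × ℝ} {z : ℝ × ℝ} {d ε : ℝ} (hε : 0 < ε)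
    (hd : distToCurve r z ≤ d) : ∃ t ∈ Icc (0 : ℝ) 1, dist z (r t) < d + ε := by
  have hne : ((fun t => Real.sqrt ((z.1 - (r t).1) ^ 2 + (z.2 - (r t).2) ^ 2)) ''
      Icc (0 : ℝ) 1).Nonempty := (nonempty_Icc.2 zero_le_one).image _
  obtain ⟨_, ⟨t, ht, rfl⟩, hlt⟩ := Real.lt_sInf_add_pos hne hε
  exact ⟨t, ht, (Prod.dist_le_sqrt z (r t)).trans_lt (hlt.trans_le (add_le_add hd le_rfl))⟩

lemma LipschitzOnWith.exists_dist_le_sample {E : Type*} [PseudoMetricSpace E] {r : ℝ → E}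
    {L : NNReal} (hr : LipschitzOnWith L r (Icc 0 1)) {M : ℕ} (hM : 0 < M) {t : ℝ}
    (ht : t ∈ Icc (0 : ℝ) 1) : ∃ k ≤ M, dist (r t) (r (k / M)) ≤ L / M := by
  have hMr : (0 : ℝ) < M := by exact_mod_cast hM
  have htM : t * M ≤ M := by nlinarith [ht.2]
  refine ⟨⌊t * M⌋₊, Nat.floor_le_of_le htM, ?_⟩
  have hk_le : (⌊t * M⌋₊ : ℝ) ≤ t * M := Nat.floor_le (by nlinarith [ht.1])
  have hk_lt : t * M < ⌊t * M⌋₊ + 1 := Nat.lt_floor_add_one _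
  have hk_mem : (⌊t * M⌋₊ : ℝ) / M ∈ Icc (0 : ℝ) 1 :=
    ⟨by positivity, (div_le_one hMr).2 (hk_le.trans htM)⟩
  have hdt : dist t (⌊t * M⌋₊ / M) ≤ 1 / M := by
    have hlo : (⌊t * M⌋₊ : ℝ) / M ≤ t := by rw [div_le_iff₀ hMr]; linarith
    have hhi : t < (⌊t * M⌋₊ : ℝ) / M + 1 / M := by rw [← add_div, lt_div_iff₀ hMr]; linarith
    rw [Real.dist_eq, abs_le]
    constructor <;> linarith [one_div_pos.2 hMr]
  calc dist (r t) (r (⌊t * M⌋₊ / M)) ≤ L * dist t (⌊t * M⌋₊ / M) := hr.dist_le_mul t ht _ hk_mem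
    _ ≤ L * (1 / M) := by gcongr
    _ = L / M := mul_one_div _ _

lemma filter_distToCurve_le_subset_biUnion {r : ℝ → ℝ × ℝ} {L : NNReal}
    (hLip : LipschitzOnWith L r (Icc 0 1)) (K : ℝ) {N M : ℕ} (hN : 0 < N) (hM : 0 < M)
    (hLM : (L : ℝ) / M ≤ 2 / N) :
    (Finset.range (N + 1) ×ˢ Finset.range (N + 1)).filter
        (fun ij => distToCurve r (nodePt N ij.1 ij.2) ≤ K * (2 / (N : ℝ))) ⊆
      (Finset.range (M + 1)).biUnion fun k => nearNodes N (r (k / M)) (K + 2) := by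
  intro ij hij
  obtain ⟨hij_grid, hij_near⟩ := Finset.mem_filter.1 hij
  obtain ⟨t, ht, hzt⟩ := exists_dist_lt_of_distToCurve_le (ε := 2 / N) (by positivity) hij_near
  obtain ⟨k, hkM, hk⟩ := hLip.exists_dist_le_sample hM ht
  refine Finset.mem_biUnion.2 ⟨k, Finset.mem_range.2 (Nat.lt_succ_of_le hkM),
    Finset.mem_filter.2 ⟨hij_grid, ?_⟩⟩
  calc dist (nodePt N ij.1 ij.2) (r (k / M))
      ≤ dist (nodePt N ij.1 ij.2) (r t) + dist (r t) (r (k / M)) := dist_triangle _ _ _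
    _ ≤ (K + 2) * (2 / N) := by linarith

theorem stmt11_general (r : ℝ → ℝ × ℝ) (L : NNReal) (hLip : LipschitzOnWith L r (Icc 0 1))
    (K : ℝ) :
    ∃ C > (0 : ℝ), ∀ N : ℕ, 2 ≤ N →
      (((Finset.range (N + 1) ×ˢ Finset.range (N + 1)).filter
          (fun ij => distToCurve r (nodePt N ij.1 ij.2) ≤ K * (2 / (N : ℝ)))).card : ℝ)
        ≤ C * N := by
  set L' : ℕ := ⌈(L : ℝ)⌉₊ + 1
  set B : ℕ := (⌊2 * (K + 2)⌋₊ + 1) ^ 2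
  refine ⟨2 * L' * B, by positivity, fun N hN => ?_⟩
  have hN0 : 0 < N := by omega
  have hNr : (2 : ℝ) ≤ N := by exact_mod_cast hN
  have hLL' : (L : ℝ) ≤ L' := by
    simp only [L', Nat.cast_add, Nat.cast_one]; linarith [Nat.le_ceil (L : ℝ)]
  have hLM : (L : ℝ) / (L' * N : ℕ) ≤ 2 / N := by
    rw [div_le_div_iff₀ (by positivity) (by positivity)]; push_cast; nlinarith [L.coe_nonneg]
  have hcard := (Finset.card_le_card
    (filter_distToCurve_le_subset_biUnion hLip K hN0 (by positivity) hLM)).trans <|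
      Finset.card_biUnion_le.trans <| Finset.sum_le_card_nsmul _ _ B fun k _ =>
        card_nearNodes_le hN0 _ _
  rw [Finset.card_range, smul_eq_mul] at hcard
  calc _ ≤ ((L' * N + 1 : ℕ) : ℝ) * B := by exact_mod_cast hcard
    _ ≤ (2 * L' * N : ℝ) * B := by
        gcongr; push_cast; nlinarith [show (1 : ℝ) ≤ L' by simp [L']]
    _ = 2 * L' * B * N := by ring

/-- For a Lipschitz closed curve `γ` in the open square `(-1,1)²` and `K > 0`, the number of
grid nodes within (Euclidean) distance `K h` of `γ` is at most `C N`. -/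
theorem stmt11 (r : ℝ → ℝ × ℝ) (L : NNReal) (hLip : LipschitzOnWith L r (Icc 0 1))
    (hcl : r 0 = r 1)
    (him : ∀ t ∈ Icc (0 : ℝ) 1, r t ∈ Ioo (-1 : ℝ) 1 ×ˢ Ioo (-1 : ℝ) 1)
    (K : ℝ) (hK : 0 < K) :
    ∃ C > (0 : ℝ), ∀ N : ℕ, 2 ≤ N →
      (((Finset.range (N + 1) ×ˢ Finset.range (N + 1)).filter
          (fun ij => distToCurve r (nodePt N ij.1 ij.2) ≤ K * (2 / (N : ℝ)))).card : ℝ)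
        ≤ C * N :=
  stmt11_general r L hLip K
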